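/- Fix ν ∈ (0,1] and suppose the hazard function H = −ln(1−F) is NOT star-shaped on S_ν = {x : x ≤ F^{-1}(1−ν)}. Define F^ℰ_ν = ℰ∘(ℰ^{-1}∘F|_{S_ν})_* and d = sup_{S_ν}(F − F^ℰ_ν) > 0. Let 𝔽^ℰ_{n,ν} = ℰ∘(ℍ_n|_{S_{n,ν}})_* with ℍ_n = −ln(1−𝔽_n) and S_{n,ν} = {x ≤ 𝔽_n^{-1}(1−ν)}. Then for every ε ∈ (0,d), P( sup_{S_{n,ν}} |𝔽_n(x) − 𝔽^ℰ_{n,ν}(x)| ≥ d − ε ) → 1 as n → ∞. -/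

import Mathlib

open MeasureTheory ProbabilityTheory Set Filter

noncomputable section

/-- Left-continuous generalized inverse (quantile function) of `F`. -/
def quantile (F : ℝ → ℝ) (p : ℝ) : ℝ := sInf {x : ℝ | p ≤ F x}

/-- CDF of a measure on `ℝ`. -/
def cdfOf (μ : Measure ℝ) : ℝ → ℝ := fun x => (μ (Iic x)).toReal

/-- Empirical CDF of a sample. -/
def empCDF {n : ℕ} (xs : Fin n → ℝ) : ℝ → ℝ :=
  fun t => ((Finset.univ.filter fun i => xs i ≤ t).card : ℝ) / n

/-- The `i`-th order statistic (1-based) of a sample, as the empirical quantile at `i/n`. -/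
def orderStat {n : ℕ} (xs : Fin n → ℝ) (i : ℕ) : ℝ := quantile (empCDF xs) (i / n)

/-- A non-negative, non-decreasing function `φ` is star-shaped if `φ x / x` is non-decreasing
on `x > 0`. -/
def StarShapedFn (φ : ℝ → ℝ) : Prop :=
  Monotone φ ∧ (∀ x, 0 ≤ φ x) ∧ ∀ x y : ℝ, 0 < x → x ≤ y → φ x / x ≤ φ y / y

/-- Star-shapedness of `f` restricted to the set `S`: `f x / x` is non-decreasing on `S`. -/
def StarShapedOnSet (S : Set ℝ) (f : ℝ → ℝ) : Prop :=
  ∀ x ∈ S, ∀ y ∈ S, 0 < x → x ≤ y → f x / x ≤ f y / y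

/-- Greatest star-shaped minorant of the restriction of `φ` to `S`: the pointwise supremum of
all star-shaped functions lying below `φ` on `S`. -/
def gsmOn (φ : ℝ → ℝ) (S : Set ℝ) : ℝ → ℝ :=
  fun x => sSup {y : ℝ | ∃ ψ : ℝ → ℝ, StarShapedFn ψ ∧ (∀ t ∈ S, ψ t ≤ φ t) ∧ y = ψ x}

/-- The unit exponential CDF `ℰ(x) = 1 − e^{−x}`. -/
def expCDF (x : ℝ) : ℝ := 1 - Real.exp (-x)

/-- The empirical hazard function `ℍₙ = −ln(1 − 𝔽ₙ)`. -/
def hazEmp {n : ℕ} (xs : Fin n → ℝ) : ℝ → ℝ := fun t => -Real.log (1 - empCDF xs t)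

/-- `n_ν`, the (1-based) index with `X₍n_ν₎ = 𝔽ₙ⁻¹(1 − ν)`. -/
def nNu (ν : ℝ) (n : ℕ) : ℕ := ⌈(1 - ν) * n⌉₊

/-- The restricted test statistic
`T_*^ν(𝔽ₙ) = sup_{i=2,…,n_ν−1} ( (i−1)/n − ℰ∘(ℍₙ|_{S_{n,ν}})_*(X₍ᵢ₎) )`. -/
def TnuStat (ν : ℝ) {n : ℕ} (xs : Fin n → ℝ) : ℝ :=
  sSup {v : ℝ | ∃ i : ℕ, 2 ≤ i ∧ i ≤ nNu ν n - 1 ∧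
    v = ((i : ℝ) - 1) / n -
      expCDF (gsmOn (hazEmp xs) (Iic (quantile (empCDF xs) (1 - ν))) (orderStat xs i))}

/-- `Xs` is an i.i.d. sample from the distribution `μ`. -/
def IsIIDSample {Ω : Type*} [MeasurableSpace Ω] (P : Measure Ω) (μ : Measure ℝ)
    {n : ℕ} (Xs : Fin n → Ω → ℝ) : Prop :=
  (∀ i, Measurable (Xs i)) ∧ iIndepFun Xs P ∧ ∀ i, P.map (Xs i) = μ


/-!
Non-star-shapedness gives `0 < a ≤ b` in `S_ν` with `H(b)/b < H(a)/a`. Every star-shaped minorant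
`ψ` then has `ψ(a) ≤ a ψ(b)/b ≤ a H(b)/b < H(a)`, so `F − F^ℰ_ν > 0` at `a`, and `d > 0`.

For the limit, the same bound `ψ(x) ≤ x ℍₙ(y)/y` for `0 < x ≤ y ∈ S_{n,ν}` shows that the empirical
statistic is at least `𝔽ₙ(x₀) − ℰ(x₀ ℍₙ(y)/y)`, a continuous function of `(𝔽ₙ(x₀), 𝔽ₙ(y))`.
Since `(H|_{S_ν})_*(x) = x · inf_{x ≤ y ∈ S_ν} H(y)/y`, there are `0 < x₀ ≤ y < F⁻¹(1 − ν)` at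
which this function, evaluated at `(F(x₀), F(y))`, exceeds `d − ε`. By Chebyshev's inequality
`𝔽ₙ(x₀) → F(x₀)` and `𝔽ₙ(y) → F(y)` in probability, and `F(y) < 1 − ν` puts `y` in `S_{n,ν}`
with probability tending to one.
-/

open Topology

section StarShapedMinorant

variable {φ : ℝ → ℝ} {c : ℝ}

lemma starShapedFn_zero : StarShapedFn fun _ => 0 :=
  ⟨monotone_const, fun _ => le_rfl, fun _ _ _ _ => by simp⟩

lemma starShapedFn_max_mul {R : ℝ → ℝ} (hR : Monotone R) (hR0 : ∀ x, 0 ≤ R x) :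
    StarShapedFn fun x => max x 0 * R x := by
  refine ⟨fun x y hxy => mul_le_mul (max_le_max_right 0 hxy) (hR hxy) (hR0 x) (le_max_right y 0),
    fun x => mul_nonneg (le_max_right x 0) (hR0 x), fun x y hx hxy => ?_⟩
  have hy := hx.trans_le hxy
  dsimp only
  rw [max_eq_left hx.le, max_eq_left hy.le, mul_div_cancel_left₀ _ hx.ne',
    mul_div_cancel_left₀ _ hy.ne']
  exact hR hxy

lemma le_gsmOn {ψ : ℝ → ℝ} (hψ : StarShapedFn ψ) (hψφ : ∀ t ∈ Iic c, ψ t ≤ φ t) {x : ℝ}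
    (hx : x ≤ c) : ψ x ≤ gsmOn φ (Iic c) x := by
  refine le_csSup ⟨φ c, ?_⟩ ⟨ψ, hψ, hψφ, rfl⟩
  rintro _ ⟨χ, hχ, hχφ, rfl⟩
  exact (hχ.1 hx).trans (hχφ c self_mem_Iic)

lemma gsmOn_le (h0 : ∀ t ∈ Iic c, 0 ≤ φ t) {x b : ℝ}
    (hb : ∀ ψ, StarShapedFn ψ → (∀ t ∈ Iic c, ψ t ≤ φ t) → ψ x ≤ b) :
    gsmOn φ (Iic c) x ≤ b :=
  csSup_le ⟨0, _, starShapedFn_zero, h0, rfl⟩ fun _ ⟨ψ, hψ, hψφ, hy⟩ => hy ▸ hb ψ hψ hψφ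

lemma gsmOn_nonneg (h0 : ∀ t ∈ Iic c, 0 ≤ φ t) {x : ℝ} (hx : x ≤ c) : 0 ≤ gsmOn φ (Iic c) x :=
  le_gsmOn starShapedFn_zero h0 hx

lemma monotoneOn_gsmOn (h0 : ∀ t ∈ Iic c, 0 ≤ φ t) : MonotoneOn (gsmOn φ (Iic c)) (Iic c) :=
  fun _ _ _ hy hxy => gsmOn_le h0 fun _ hψ hψφ => (hψ.1 hxy).trans (le_gsmOn hψ hψφ hy)

lemma gsmOn_le_mul_div (h0 : ∀ t ∈ Iic c, 0 ≤ φ t) {x y : ℝ} (hx : 0 < x) (hxy : x ≤ y)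
    (hy : y ≤ c) : gsmOn φ (Iic c) x ≤ x * (φ y / y) := by
  refine gsmOn_le h0 fun ψ hψ hψφ => ?_
  calc ψ x = x * (ψ x / x) := (mul_div_cancel₀ _ hx.ne').symm
    _ ≤ x * (ψ y / y) := mul_le_mul_of_nonneg_left (hψ.2.2 x y hx hxy) hx.le
    _ ≤ x * (φ y / y) :=
      mul_le_mul_of_nonneg_left (div_le_div_of_nonneg_right (hψφ y hy) (hx.trans_le hxy).le) hx.le

lemma mul_sInf_le_gsmOn (h0 : ∀ t ∈ Iic c, 0 ≤ φ t) {x : ℝ} (hx : 0 < x) (hxc : x ≤ c) :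
    x * sInf ((fun y => φ y / y) '' Icc x c) ≤ gsmOn φ (Iic c) x := by
  -- `t ↦ max t 0 · inf {φ y / y | 0 < y ≤ c, min t c ≤ y}` is a star-shaped minorant of `φ`
  set A : ℝ → Set ℝ := fun t => (fun y => φ y / y) '' (Ioc 0 c ∩ Ici (min t c))
  have hA0 : ∀ t, ∀ r ∈ A t, 0 ≤ r := by
    rintro t _ ⟨y, ⟨⟨hy, hyc⟩, _⟩, rfl⟩
    exact div_nonneg (h0 y hyc) hy.le
  have hAne : ∀ t, (A t).Nonempty := fun t =>
    ⟨_, c, ⟨⟨hx.trans_le hxc, le_rfl⟩, min_le_right t c⟩, rfl⟩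
  have hR : Monotone fun t => sInf (A t) := fun s t hst =>
    csInf_le_csInf ⟨0, hA0 s⟩ (hAne t) (image_mono (inter_subset_inter_right _
      (Ici_subset_Ici.2 (min_le_min_right c hst))))
  have hAx : A x = (fun y => φ y / y) '' Icc x c := by
    show _ '' (Ioc 0 c ∩ Ici (min x c)) = _
    rw [min_eq_left hxc]
    congr 1
    ext y
    simp only [mem_inter_iff, mem_Ioc, mem_Ici, mem_Icc]
    exact ⟨fun h => ⟨h.2, h.1.2⟩, fun h => ⟨⟨hx.trans_le h.1, h.2⟩, h.1⟩⟩
  have hψφ : ∀ t ∈ Iic c, max t 0 * sInf (A t) ≤ φ t := by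
    intro t ht
    rcases le_or_gt t 0 with ht0 | ht0
    · rw [max_eq_right ht0, zero_mul]
      exact h0 t ht
    · rw [max_eq_left ht0.le]
      calc t * sInf (A t) ≤ t * (φ t / t) :=
            mul_le_mul_of_nonneg_left (csInf_le ⟨0, hA0 t⟩ ⟨t, ⟨⟨ht0, ht⟩, min_le_left t c⟩, rfl⟩)
              ht0.le
        _ = φ t := mul_div_cancel₀ _ ht0.ne'
  simpa only [max_eq_left hx.le, hAx] using
    le_gsmOn (starShapedFn_max_mul hR fun t => le_csInf (hAne t) (hA0 t)) hψφ hxc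

lemma exists_gsmOn_lt_of_not_starShapedOnSet (h0 : ∀ t ∈ Iic c, 0 ≤ φ t)
    (h : ¬ StarShapedOnSet (Iic c) φ) : ∃ a ∈ Iic c, 0 < a ∧ gsmOn φ (Iic c) a < φ a := by
  simp only [StarShapedOnSet, not_forall, not_le] at h
  obtain ⟨a, ha, b, hb, ha0, hab, hba⟩ := h
  refine ⟨a, ha, ha0, (gsmOn_le_mul_div h0 ha0 hab hb).trans_lt ?_⟩
  calc a * (φ b / b) < a * (φ a / a) := mul_lt_mul_of_pos_left hba ha0
    _ = φ a := mul_div_cancel₀ _ ha0.ne'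

lemma exists_mul_div_lt_gsmOn_add (h0 : ∀ t ∈ Iic c, 0 ≤ φ t) (hφc : ContinuousAt φ c) {x δ : ℝ}
    (hx : 0 < x) (hxc : x < c) (hδ : 0 < δ) :
    ∃ y ∈ Ico x c, x * (φ y / y) < gsmOn φ (Iic c) x + δ := by
  set r : ℝ → ℝ := fun y => φ y / y
  suffices ∃ y ∈ Ico x c, r y < sInf (r '' Icc x c) + δ / x by
    obtain ⟨y, hy, hry⟩ := this
    refine ⟨y, hy, ?_⟩
    calc x * r y < x * (sInf (r '' Icc x c) + δ / x) := mul_lt_mul_of_pos_left hry hx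
      _ = x * sInf (r '' Icc x c) + δ := by field_simp
      _ ≤ gsmOn φ (Iic c) x + δ := by gcongr; exact mul_sInf_le_gsmOn h0 hx hxc.le
  obtain ⟨_, ⟨y, hy, rfl⟩, hry⟩ := exists_lt_of_csInf_lt ((nonempty_Icc.2 hxc.le).image r)
    (lt_add_of_pos_right _ (div_pos hδ hx))
  rcases hy.2.lt_or_eq with hyc | rfl
  · exact ⟨y, ⟨hy.1, hyc⟩, hry⟩
  · have hr : ContinuousAt r y := hφc.div continuousAt_id (hx.trans hxc).ne'
    obtain ⟨z, hrz, hz⟩ := (((hr.tendsto.mono_left nhdsWithin_le_nhds).eventually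
      (eventually_lt_nhds hry)).and (Ioo_mem_nhdsLT hxc)).exists
    exact ⟨z, ⟨hz.1.le, hz.2⟩, hrz⟩

end StarShapedMinorant

lemma expCDF_strictMono : StrictMono expCDF := fun _ _ h => by
  simpa [expCDF] using h

lemma expCDF_mono : Monotone expCDF := expCDF_strictMono.monotone

lemma continuous_expCDF : Continuous expCDF := by
  unfold expCDF; fun_prop

lemma expCDF_nonneg {x : ℝ} (hx : 0 ≤ x) : 0 ≤ expCDF x := by
  simpa [expCDF] using hx

lemma expCDF_le_one (x : ℝ) : expCDF x ≤ 1 := by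
  simpa [expCDF] using (Real.exp_pos _).le

lemma expCDF_add_le {a b : ℝ} (ha : 0 ≤ a) (hb : 0 ≤ b) : expCDF (a + b) ≤ expCDF a + b := by
  have h1 : Real.exp (-a) ≤ 1 := Real.exp_le_one_iff.2 (neg_nonpos.2 ha)
  have h2 : 1 - b ≤ Real.exp (-b) := by linarith [Real.add_one_le_exp (-b)]
  simp only [expCDF, neg_add, Real.exp_add]
  nlinarith [Real.exp_pos (-a)]

lemma neg_log_one_sub_nonneg {p : ℝ} (h0 : 0 ≤ p) (h1 : p ≤ 1) : 0 ≤ -Real.log (1 - p) :=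
  neg_nonneg.2 (Real.log_nonpos (by linarith) (by linarith))

lemma expCDF_neg_log_one_sub {p : ℝ} (hp : p < 1) : expCDF (-Real.log (1 - p)) = p := by
  rw [expCDF, neg_neg, Real.exp_log (by linarith)]
  ring

section Quantile

variable {F : ℝ → ℝ} {p : ℝ}

lemma bddBelow_of_quantile_pos (hq : 0 < quantile F p) : BddBelow {x | p ≤ F x} := by
  by_contra h
  rw [quantile, Real.sInf_of_not_bddBelow h] at hq
  exact hq.false

lemma apply_lt_of_lt_quantile (hq : 0 < quantile F p) {x : ℝ} (hx : x < quantile F p) :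
    F x < p :=
  not_le.1 fun h => (csInf_le (bddBelow_of_quantile_pos hq) h).not_gt hx

lemma apply_quantile_le (hF : ContinuousAt F (quantile F p)) (hq : 0 < quantile F p) :
    F (quantile F p) ≤ p :=
  le_of_tendsto (hF.tendsto.mono_left nhdsWithin_le_nhds)
    (eventually_nhdsWithin_of_forall (s := Iio _) fun _ hx => (apply_lt_of_lt_quantile hq hx).le)

lemma le_quantile (hF : Monotone F) (hp : ∃ M, p ≤ F M) {y : ℝ} (hy : F y < p) :
    y ≤ quantile F p :=
  le_csInf hp fun _ hx => not_lt.1 fun hxy => (hy.trans_le hx).not_ge (hF hxy.le)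

end Quantile

section EmpiricalCDF

variable {n : ℕ} (xs : Fin n → ℝ)

lemma empCDF_nonneg (t : ℝ) : 0 ≤ empCDF xs t := by
  unfold empCDF; positivity

lemma empCDF_le_one (t : ℝ) : empCDF xs t ≤ 1 := by
  refine div_le_one_of_le₀ ?_ n.cast_nonneg
  simpa using (Finset.card_filter_le Finset.univ fun i => xs i ≤ t)

lemma empCDF_mono : Monotone (empCDF xs) := fun _ _ hst =>
  div_le_div_of_nonneg_right (Nat.cast_le.2 (Finset.card_le_card
    (Finset.monotone_filter_right _ fun _ _ hi => hi.trans hst))) n.cast_nonneg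

lemma exists_empCDF_eq_one (hn : 0 < n) : ∃ M, empCDF xs M = 1 := by
  have : Nonempty (Fin n) := ⟨⟨0, hn⟩⟩
  refine ⟨Finset.univ.sup' Finset.univ_nonempty xs, ?_⟩
  rw [empCDF, Finset.filter_true_of_mem fun i _ => Finset.le_sup' xs (Finset.mem_univ i),
    Finset.card_univ, Fintype.card_fin, div_self (Nat.cast_ne_zero.2 hn.ne')]

lemma hazEmp_nonneg (t : ℝ) : 0 ≤ hazEmp xs t :=
  neg_log_one_sub_nonneg (empCDF_nonneg xs t) (empCDF_le_one xs t)

lemma empCDF_sub_expCDF_le_iSup (hn : 0 < n) {p x y : ℝ} (hp : p ≤ 1) (hx : 0 < x) (hxy : x ≤ y)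
    (hy : empCDF xs y < p) :
    empCDF xs x - expCDF (x * (hazEmp xs y / y)) ≤
      ⨆ t : Iic (quantile (empCDF xs) p), |empCDF xs t -
        expCDF (gsmOn (hazEmp xs) (Iic (quantile (empCDF xs) p)) t)| := by
  obtain ⟨M, hM⟩ := exists_empCDF_eq_one xs hn
  have hyq : y ≤ quantile (empCDF xs) p := le_quantile (empCDF_mono xs) ⟨M, hM ▸ hp⟩ hy
  have h0 : ∀ t ∈ Iic (quantile (empCDF xs) p), 0 ≤ hazEmp xs t := fun t _ => hazEmp_nonneg xs t
  have hbdd : BddAbove (range fun t : Iic (quantile (empCDF xs) p) =>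
      |empCDF xs t - expCDF (gsmOn (hazEmp xs) (Iic (quantile (empCDF xs) p)) t)|) := by
    refine ⟨1, ?_⟩
    rintro _ ⟨⟨t, ht⟩, rfl⟩
    have := expCDF_nonneg (gsmOn_nonneg h0 ht)
    rw [abs_le]
    constructor <;> linarith [empCDF_nonneg xs t, empCDF_le_one xs t, expCDF_le_one
      (gsmOn (hazEmp xs) (Iic (quantile (empCDF xs) p)) t)]
  calc empCDF xs x - expCDF (x * (hazEmp xs y / y))
      ≤ empCDF xs x - expCDF (gsmOn (hazEmp xs) (Iic (quantile (empCDF xs) p)) x) :=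
        sub_le_sub_left (expCDF_mono (gsmOn_le_mul_div h0 hx hxy hyq)) _
    _ ≤ _ := le_abs_self _
    _ ≤ _ := le_ciSup hbdd ⟨x, hxy.trans hyq⟩

end EmpiricalCDF

section WeakLaw

variable {Ω : Type*} [MeasurableSpace Ω] {P : Measure Ω} [IsProbabilityMeasure P] {μ : Measure ℝ}

lemma empCDF_eq_sum_indicator {n : ℕ} (xs : Fin n → ℝ) (t : ℝ) :
    empCDF xs t = (∑ i, (Iic t).indicator 1 (xs i)) / n := by
  simp only [empCDF, indicator_apply, mem_Iic, Pi.one_apply, Finset.sum_boole]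

lemma measure_le_abs_sum_sub_sum_integral_le {n : ℕ} {Y : Fin n → Ω → ℝ}
    (hY : ∀ i, Measurable (Y i)) (hY01 : ∀ i ω, Y i ω ∈ Icc (0 : ℝ) 1)
    (hindep : Pairwise fun i j => IndepFun (Y i) (Y j) P) {c : ℝ} (hc : 0 < c) :
    P {ω | c ≤ |∑ i, Y i ω - ∑ i, P[Y i]|} ≤ ENNReal.ofReal (n / (4 * c ^ 2)) := by
  have hY2 : ∀ i, MemLp (Y i) 2 P := fun i =>
    MemLp.of_bound (hY i).aestronglyMeasurable 1
      (ae_of_all _ fun ω => (Real.norm_of_nonneg (hY01 i ω).1).trans_le (hY01 i ω).2)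
  have hVY : ∀ i, Var[Y i; P] ≤ 1 / 4 := fun i =>
    (variance_le_sq_of_bounded (ae_of_all P (hY01 i)) (hY i).aemeasurable).trans_eq (by norm_num)
  have hV : Var[∑ i, Y i; P] ≤ n / 4 := by
    rw [IndepFun.variance_sum (fun i _ => hY2 i) fun i _ j _ hij => hindep hij]
    calc ∑ i, Var[Y i; P] ≤ ∑ _i : Fin n, (1 / 4 : ℝ) := Finset.sum_le_sum fun i _ => hVY i
      _ = n / 4 := by simp [div_eq_mul_inv]
  have hE : P[∑ i, Y i] = ∑ i, P[Y i] := by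
    simp only [Finset.sum_apply]
    exact integral_finsetSum _ fun i _ => (hY2 i).integrable one_le_two
  calc P {ω | c ≤ |∑ i, Y i ω - ∑ i, P[Y i]|}
      ≤ ENNReal.ofReal (Var[∑ i, Y i; P] / c ^ 2) := by
        rw [← hE]
        simpa only [Finset.sum_apply] using
          meas_ge_le_variance_div_sq (memLp_finsetSum' Finset.univ fun i _ => hY2 i) hc
    _ ≤ ENNReal.ofReal (n / 4 / c ^ 2) := by gcongr
    _ = ENNReal.ofReal (n / (4 * c ^ 2)) := by rw [div_div]

lemma measure_le_abs_empCDF_sub_cdfOf_le {n : ℕ} (hn : 0 < n) {X : Fin n → Ω → ℝ}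
    (hX : IsIIDSample P μ X) (t : ℝ) {η : ℝ} (hη : 0 < η) :
    P {ω | η ≤ |empCDF (fun i => X i ω) t - cdfOf μ t|} ≤ ENNReal.ofReal (1 / (4 * n * η ^ 2)) := by
  obtain ⟨hmeas, hindep, hmap⟩ := hX
  set f : ℝ → ℝ := (Iic t).indicator 1
  have hf : Measurable f := measurable_one.indicator measurableSet_Iic
  have hf01 : ∀ x, f x ∈ Icc (0 : ℝ) 1 := fun x => by
    by_cases hx : x ∈ Iic t <;> simp [f, hx]
  have hE : ∀ i, P[f ∘ X i] = cdfOf μ t := fun i => by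
    change ∫ ω, f (X i ω) ∂P = _
    rw [← integral_map (hmeas i).aemeasurable hf.aestronglyMeasurable, hmap i,
      integral_indicator_one measurableSet_Iic]
    rfl
  have hn : (0 : ℝ) < n := Nat.cast_pos.2 hn
  calc P {ω | η ≤ |empCDF (fun i => X i ω) t - cdfOf μ t|}
      ≤ P {ω | n * η ≤ |∑ i, (f ∘ X i) ω - ∑ i, P[f ∘ X i]|} :=
        measure_mono fun ω (hω : η ≤ _) => by
          have hsum : ∑ i, (f ∘ X i) ω - ∑ i, P[f ∘ X i] =
              n * (empCDF (fun i => X i ω) t - cdfOf μ t) := by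
            simp only [hE, Finset.sum_const, Finset.card_univ, Fintype.card_fin, nsmul_eq_mul,
              empCDF_eq_sum_indicator]
            field_simp
            rfl
          change (n : ℝ) * η ≤ _
          rw [hsum, abs_mul, abs_of_pos hn]
          exact mul_le_mul_of_nonneg_left hω hn.le
    _ ≤ ENNReal.ofReal (n / (4 * (n * η) ^ 2)) :=
        measure_le_abs_sum_sub_sum_integral_le (fun i => hf.comp (hmeas i)) (fun i ω => hf01 _)
          (fun i j hij => (hindep.indepFun hij).comp hf hf) (by positivity)
    _ = ENNReal.ofReal (1 / (4 * n * η ^ 2)) := by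
        congr 1
        field_simp

lemma tendsto_measure_le_abs_empCDF_sub_cdfOf {X : (n : ℕ) → Fin n → Ω → ℝ}
    (hX : ∀ n, IsIIDSample P μ (X n)) (t : ℝ) {η : ℝ} (hη : 0 < η) :
    Tendsto (fun n => P {ω | η ≤ |empCDF (fun i => X n i ω) t - cdfOf μ t|}) atTop (𝓝 0) := by
  have hlim : Tendsto (fun n : ℕ => ENNReal.ofReal (1 / (4 * η ^ 2) / n)) atTop (𝓝 0) := by
    simpa only [ENNReal.ofReal_zero] using
      ENNReal.tendsto_ofReal (tendsto_const_div_atTop_nhds_zero_nat (1 / (4 * η ^ 2)))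
  refine tendsto_of_tendsto_of_tendsto_of_le_of_le' tendsto_const_nhds hlim
    (Eventually.of_forall fun _ => bot_le) ?_
  filter_upwards [eventually_gt_atTop 0] with n hn
  refine (measure_le_abs_empCDF_sub_cdfOf_le hn (hX n) t hη).trans_eq ?_
  congr 1
  ring

lemma tendsto_toReal_measure_of_compl_subset {E B : ℕ → Set Ω}
    (hBE : ∀ᶠ n in atTop, (B n)ᶜ ⊆ E n) (hB : Tendsto (fun n => P (B n)) atTop (𝓝 0)) :
    Tendsto (fun n => (P (E n)).toReal) atTop (𝓝 1) := by
  have hlow : Tendsto (fun n => 1 - P (B n)) atTop (𝓝 1) := by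
    simpa using ENNReal.Tendsto.sub tendsto_const_nhds hB (Or.inl ENNReal.one_ne_top)
  have hE : Tendsto (fun n => P (E n)) atTop (𝓝 1) := by
    refine tendsto_of_tendsto_of_tendsto_of_le_of_le' hlow tendsto_const_nhds ?_
      (Eventually.of_forall fun _ => prob_le_one)
    filter_upwards [hBE] with n hn
    rw [tsub_le_iff_left, ← measure_univ (μ := P), ← union_compl_self (B n)]
    exact (measure_union_le _ _).trans (by gcongr)
  exact (ENNReal.tendsto_toReal ENNReal.one_ne_top).comp hE

end WeakLaw

lemma exists_pos_forall_lt_sub_expCDF {x y u₀ v₀ p b : ℝ} (hv₀ : v₀ < p) (hp : p ≤ 1)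
    (hb : b < u₀ - expCDF (x * (-Real.log (1 - v₀) / y))) :
    ∃ η > 0, ∀ u v, |u - u₀| < η → |v - v₀| < η →
      v < p ∧ b < u - expCDF (x * (-Real.log (1 - v) / y)) := by
  have hlog : ContinuousAt (fun w : ℝ × ℝ => Real.log (1 - w.2)) (u₀, v₀) :=
    (continuousAt_const.sub continuousAt_snd).log (sub_ne_zero.2 (by linarith))
  have hT : ContinuousAt (fun w : ℝ × ℝ => w.1 - expCDF (x * (-Real.log (1 - w.2) / y)))
      (u₀, v₀) :=
    continuousAt_fst.sub (continuous_expCDF.continuousAt.comp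
      (continuousAt_const.mul (hlog.neg.div_const y)))
  obtain ⟨η, hη, h⟩ := Metric.eventually_nhds_iff.1
    ((continuousAt_snd.eventually (gt_mem_nhds hv₀)).and (hT.eventually (lt_mem_nhds hb)))
  exact ⟨η, hη, fun u v hu hv => h (show dist (u, v) (u₀, v₀) < η by
    rw [Prod.dist_eq, Real.dist_eq, Real.dist_eq]; exact max_lt hu hv)⟩

section Population

variable {μ : Measure ℝ} [IsProbabilityMeasure μ]

lemma cdfOf_eq_cdf : cdfOf μ = cdf μ := funext fun x => (cdf_eq_real μ x).symm

lemma cdfOf_mono : Monotone (cdfOf μ) := cdfOf_eq_cdf (μ := μ) ▸ monotone_cdf μ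

lemma cdfOf_nonneg (x : ℝ) : 0 ≤ cdfOf μ x := cdfOf_eq_cdf (μ := μ) ▸ cdf_nonneg μ x

lemma cdfOf_le_one (x : ℝ) : cdfOf μ x ≤ 1 := cdfOf_eq_cdf (μ := μ) ▸ cdf_le_one μ x

lemma neg_log_one_sub_cdfOf_nonneg (x : ℝ) : 0 ≤ -Real.log (1 - cdfOf μ x) :=
  neg_log_one_sub_nonneg (cdfOf_nonneg x) (cdfOf_le_one x)

lemma exists_lt_cdfOf_sub_expCDF_mul_div (hF : Continuous (cdfOf μ)) (hF0 : cdfOf μ 0 = 0)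
    {q b : ℝ} (hq : cdfOf μ q < 1) (hb0 : 0 ≤ b)
    (hb : b < ⨆ x : Iic q,
      (cdfOf μ x - expCDF (gsmOn (fun t => -Real.log (1 - cdfOf μ t)) (Iic q) x))) :
    ∃ x₀ y, 0 < x₀ ∧ x₀ ≤ y ∧ y < q ∧
      b < cdfOf μ x₀ - expCDF (x₀ * (-Real.log (1 - cdfOf μ y) / y)) := by
  set H : ℝ → ℝ := fun t => -Real.log (1 - cdfOf μ t)
  have hH0 : ∀ t ∈ Iic q, 0 ≤ H t := fun t _ => neg_log_one_sub_cdfOf_nonneg t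
  obtain ⟨b', hbb', hb'⟩ := exists_between hb
  obtain ⟨⟨x₁, hx₁q⟩, hbx₁ : b' < cdfOf μ x₁ - expCDF (gsmOn H (Iic q) x₁)⟩ :=
    exists_lt_of_lt_ciSup hb'
  set δ := (b' - b) / 2 with hδ_def
  have hδ : 0 < δ := half_pos (sub_pos.2 hbb')
  have hx₁ : 0 < x₁ := by
    by_contra! hx₁0
    have := expCDF_nonneg (gsmOn_nonneg hH0 hx₁q)
    have := hF0 ▸ cdfOf_mono hx₁0
    linarith
  obtain ⟨x₀, hFx₀, hx₀, hx₀x₁⟩ := (((hF.tendsto x₁).mono_left nhdsWithin_le_nhds).eventually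
    (eventually_gt_nhds (sub_lt_self _ hδ))).and (Ioo_mem_nhdsLT hx₁) |>.exists
  have hHq : ContinuousAt H q :=
    ((continuousAt_const.sub hF.continuousAt).log (sub_ne_zero.2 hq.ne')).neg
  obtain ⟨y, ⟨hx₀y, hyq⟩, hy⟩ :=
    exists_mul_div_lt_gsmOn_add hH0 hHq hx₀ (hx₀x₁.trans_le hx₁q) hδ
  refine ⟨x₀, y, hx₀, hx₀y, hyq, ?_⟩
  have hGx₀ := gsmOn_nonneg hH0 (hx₀x₁.le.trans hx₁q)
  calc b < cdfOf μ x₀ - (expCDF (gsmOn H (Iic q) x₁) + δ) := by linarith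
    _ ≤ cdfOf μ x₀ - (expCDF (gsmOn H (Iic q) x₀) + δ) := by
      gcongr; exact expCDF_mono (monotoneOn_gsmOn hH0 (hx₀x₁.le.trans hx₁q) hx₁q hx₀x₁.le)
    _ ≤ cdfOf μ x₀ - expCDF (x₀ * (H y / y)) := by
      gcongr
      exact (expCDF_mono hy.le).trans (expCDF_add_le hGx₀ hδ.le)

lemma iSup_cdfOf_sub_expCDF_gsmOn_pos {q a : ℝ} (haq : a ≤ q) (hFa : cdfOf μ a < 1)
    (hGa : gsmOn (fun t => -Real.log (1 - cdfOf μ t)) (Iic q) a < -Real.log (1 - cdfOf μ a)) :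
    0 < ⨆ x : Iic q,
      (cdfOf μ x - expCDF (gsmOn (fun t => -Real.log (1 - cdfOf μ t)) (Iic q) x)) := by
  have hbdd : BddAbove (range fun x : Iic q => cdfOf μ x -
      expCDF (gsmOn (fun t => -Real.log (1 - cdfOf μ t)) (Iic q) x)) := by
    refine ⟨1, ?_⟩
    rintro _ ⟨⟨x, hx⟩, rfl⟩
    linarith [cdfOf_le_one (μ := μ) x,
      expCDF_nonneg (gsmOn_nonneg (fun t _ => neg_log_one_sub_cdfOf_nonneg (μ := μ) t) hx)]
  refine lt_of_lt_of_le ?_ (le_ciSup hbdd ⟨a, haq⟩)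
  rw [sub_pos, ← expCDF_neg_log_one_sub hFa]
  exact expCDF_strictMono hGa

end Population

theorem stmt19_general {Ω : Type*} [MeasurableSpace Ω] (P : Measure Ω) [IsProbabilityMeasure P]
    (μ : Measure ℝ) [IsProbabilityMeasure μ]
    (hFcont : Continuous (cdfOf μ)) (hF0 : cdfOf μ 0 = 0)
    (ν : ℝ) (hν0 : 0 < ν)
    (hnull : ¬ StarShapedOnSet (Iic (quantile (cdfOf μ) (1 - ν)))
      (fun x => -Real.log (1 - cdfOf μ x)))
    (Xs : (n : ℕ) → Fin n → Ω → ℝ) (hXs : ∀ n, IsIIDSample P μ (Xs n))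
    (d : ℝ)
    (hd : d = ⨆ x : (Iic (quantile (cdfOf μ) (1 - ν)) : Set ℝ),
      (cdfOf μ x - expCDF (gsmOn (fun t => -Real.log (1 - cdfOf μ t))
        (Iic (quantile (cdfOf μ) (1 - ν))) x))) :
    0 < d ∧ ∀ ε : ℝ, 0 < ε → ε < d →
      Tendsto (fun n : ℕ => (P {ω | d - ε ≤
          ⨆ x : (Iic (quantile (empCDF fun i => Xs n i ω) (1 - ν)) : Set ℝ),
            |empCDF (fun i => Xs n i ω) x -
              expCDF (gsmOn (hazEmp fun i => Xs n i ω)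
                (Iic (quantile (empCDF fun i => Xs n i ω) (1 - ν))) x)|}).toReal)
        atTop (nhds 1) := by
  set q := quantile (cdfOf μ) (1 - ν)
  have hH0 : ∀ t ∈ Iic q, 0 ≤ -Real.log (1 - cdfOf μ t) := fun t _ =>
    neg_log_one_sub_cdfOf_nonneg t
  obtain ⟨a, haq, ha, hGa⟩ := exists_gsmOn_lt_of_not_starShapedOnSet hH0 hnull
  have hq : 0 < q := ha.trans_le haq
  have hFq : cdfOf μ q < 1 := (apply_quantile_le hFcont.continuousAt hq).trans_lt (by linarith)
  have hd0 : 0 < d :=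
    hd ▸ iSup_cdfOf_sub_expCDF_gsmOn_pos haq ((cdfOf_mono haq).trans_lt hFq) hGa
  refine ⟨hd0, fun ε hε hεd => ?_⟩
  obtain ⟨x₀, y, hx₀, hx₀y, hyq, hb⟩ :=
    exists_lt_cdfOf_sub_expCDF_mul_div hFcont hF0 hFq (sub_nonneg.2 hεd.le) (hd ▸ sub_lt_self d hε)
  obtain ⟨η, hη, hgood⟩ :=
    exists_pos_forall_lt_sub_expCDF (apply_lt_of_lt_quantile hq hyq) (by linarith) hb
  refine tendsto_toReal_measure_of_compl_subset
    (B := fun n => {ω | η ≤ |empCDF (fun i => Xs n i ω) x₀ - cdfOf μ x₀|} ∪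
      {ω | η ≤ |empCDF (fun i => Xs n i ω) y - cdfOf μ y|}) ?_ ?_
  · filter_upwards [eventually_gt_atTop 0] with n hn ω hω
    simp only [mem_compl_iff, mem_union, mem_ofPred_eq, not_or, not_le] at hω
    obtain ⟨hyn, hbn⟩ := hgood _ _ hω.1 hω.2
    exact hbn.le.trans (empCDF_sub_expCDF_le_iSup _ hn (by linarith) hx₀ hx₀y hyn)
  · refine tendsto_of_tendsto_of_tendsto_of_le_of_le tendsto_const_nhds ?_ (fun _ => bot_le)
      fun n => measure_union_le _ _
    simpa using (tendsto_measure_le_abs_empCDF_sub_cdfOf hXs x₀ hη).add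
      (tendsto_measure_le_abs_empCDF_sub_cdfOf hXs y hη)

/-- if the hazard function `H = −ln(1−F)` is NOT star-shaped on `S_ν`,
then, with `F^ℰ_ν = ℰ∘(ℰ⁻¹∘F|_{S_ν})_*` and `d = sup_{S_ν}(F − F^ℰ_ν) > 0`, for every
`ε ∈ (0,d)` one has `P( sup_{S_{n,ν}} |𝔽ₙ − 𝔽^ℰ_{n,ν}| ≥ d − ε ) → 1` as `n → ∞`. -/
theorem stmt19 {Ω : Type*} [MeasurableSpace Ω] (P : Measure Ω) [IsProbabilityMeasure P]
    (μ : Measure ℝ) [IsProbabilityMeasure μ]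
    (hFcont : Continuous (cdfOf μ)) (hF0 : cdfOf μ 0 = 0)
    (ν : ℝ) (hν0 : 0 < ν) (hν1 : ν ≤ 1)
    (hnull : ¬ StarShapedOnSet (Iic (quantile (cdfOf μ) (1 - ν)))
      (fun x => -Real.log (1 - cdfOf μ x)))
    (Xs : (n : ℕ) → Fin n → Ω → ℝ) (hXs : ∀ n, IsIIDSample P μ (Xs n))
    (d : ℝ)
    (hd : d = ⨆ x : (Iic (quantile (cdfOf μ) (1 - ν)) : Set ℝ),
      (cdfOf μ x - expCDF (gsmOn (fun t => -Real.log (1 - cdfOf μ t))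
        (Iic (quantile (cdfOf μ) (1 - ν))) x))) :
    0 < d ∧ ∀ ε : ℝ, 0 < ε → ε < d →
      Tendsto (fun n : ℕ => (P {ω | d - ε ≤
          ⨆ x : (Iic (quantile (empCDF fun i => Xs n i ω) (1 - ν)) : Set ℝ),
            |empCDF (fun i => Xs n i ω) x -
              expCDF (gsmOn (hazEmp fun i => Xs n i ω)
                (Iic (quantile (empCDF fun i => Xs n i ω) (1 - ν))) x)|}).toReal)
        atTop (nhds 1) :=
  stmt19_general P μ hFcont hF0 ν hν0 hnull Xs hXs d hd
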